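/- arXiv:1412.4719 — 2 statements merged into one kernel-verified Lean document; each statement's English description precedes it below -/
import Mathlib

section
/- There exists a constant c > 0 such that for each even n there is a nonclassical polynomial f : (ZMod 2)^n → ℝ/ℤ of degree at most log₂ n + 1, namely f(x) = A(∑|x_i| − n/2)/2^k mod 1 with A = ⌊a√n⌋ and 2^{k−1} < n ≤ 2^k for suitable constant a, satisfying |E_{x∈{0,1}^n}[(−1)^{MAJ(x)} e(f(x))]| ≥ c, where MAJ(x) = 0 if ∑|x_i| ≤ n/2 and 1 otherwise. -/
/-!
Write `|x| = ∑ |x_i|` and `n = 2m`. The function `f` has the shape `(c + ∑ t_i |x_i|) / 2^k`.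
Since `|x_i + h_i| = |x_i| + |h_i| - 2 |x_i| |h_i|`, every derivative keeps this shape with `k`
replaced by `k - 1`, so `k + 1` derivatives vanish, and `k ≤ log₂ n + 1`.

The correlation only depends on `|x|`, which is binomially distributed. The terms `s` and `n - s`
carry opposite signs and conjugate phases, so the sum equals `C(2m, m) - 2i Q` with
`Q = ∑_{j<m} C(2m, j) sin(φ (m - j))`, `φ = 2πA/2^k ≍ 1/√n`. If `A = 0` then `n < 400` and the
central term `C(2m, m) ≥ 4^m/(2m+1)` suffices. Otherwise the sine is at least `sin(π/320)` on the
bulk `√n/8 ≤ m - j ≤ 5√n` of the distribution, nonnegative up to `m - j ≤ 10√n`, and Chebyshev's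
inequality bounds the mass beyond.
-/

open Finset

/-- Additive directional derivative `D_h f(x) = f(x+h) - f(x)`. -/
noncomputable def D {V M : Type*} [Add V] [AddCommGroup M] (h : V) (f : V → M) : V → M :=
  fun x => f (x + h) - f x

/-- `f` is a nonclassical polynomial of degree at most `d`:
all `(d+1)`-fold iterated derivatives vanish identically. -/
def IsNCPoly {V M : Type*} [Add V] [AddCommGroup M] (d : ℕ) (f : V → M) : Prop :=
  ∀ hs : List V, hs.length = d + 1 → hs.foldr D f = 0

/-- `e(t) = exp(2πit)` on the torus `ℝ/ℤ`. -/
noncomputable def e : AddCircle (1 : ℝ) → ℂ :=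
  Function.Periodic.lift (f := fun t : ℝ => Complex.exp (2 * (Real.pi : ℂ) * Complex.I * (t : ℂ)))
    (by
      intro t
      dsimp only
      rw [Complex.ofReal_add, Complex.ofReal_one, mul_add, mul_one, Complex.exp_add,
        Complex.exp_two_pi_mul_I, mul_one])

section NCPoly

variable {V M : Type*} [Add V] [AddCommGroup M]

lemma D_zero (h : V) : D h (0 : V → M) = 0 := by
  funext x; simp [D]

lemma foldr_D_zero (hs : List V) : hs.foldr D (0 : V → M) = 0 := by
  induction hs with
  | nil => rfl
  | cons h hs ih => rw [List.foldr_cons, ih, D_zero]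

lemma IsNCPoly.mono {d d' : ℕ} {f : V → M} (hf : IsNCPoly d f) (hdd' : d ≤ d') :
    IsNCPoly d' f := by
  intro hs hlen
  rw [← List.take_append_drop (d' - d) hs, List.foldr_append,
    hf _ (by simp [hlen]; omega), foldr_D_zero]

end NCPoly

lemma ZMod.natCast_val_add_eq_xor (z w : ZMod 2) :
    ((z + w).val : ℝ) = z.val + w.val - 2 * z.val * w.val := by
  have : ∀ z w : ZMod 2, ((z + w).val : ℤ) = z.val + w.val - 2 * z.val * w.val := by decide
  exact_mod_cast this z w

lemma ZMod.one_sub_two_mul_val_sq (z : ZMod 2) : (1 - 2 * (z.val : ℝ)) ^ 2 = 1 := by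
  have : z.val = 0 ∨ z.val = 1 := by have := z.val_lt; omega
  rcases this with h | h <;> norm_num [h]

lemma ZMod.one_sub_two_mul_val_add_one (z : ZMod 2) :
    1 - 2 * ((z + 1).val : ℝ) = -(1 - 2 * (z.val : ℝ)) := by
  rw [ZMod.natCast_val_add_eq_xor, ZMod.val_one]; push_cast; ring

section DyadicAffine

variable {ι : Type*} [Fintype ι]

def IsDyadicAffine (j : ℕ) (f : (ι → ZMod 2) → AddCircle (1 : ℝ)) : Prop :=
  ∃ (c : ℝ) (t : ι → ℤ), ∀ x, f x = ((c + ∑ i, (t i : ℝ) * (x i).val) / 2 ^ j : ℝ)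

namespace IsDyadicAffine

variable {f : (ι → ZMod 2) → AddCircle (1 : ℝ)}

lemma D {j : ℕ} (hf : IsDyadicAffine (j + 1) f) (h : ι → ZMod 2) :
    IsDyadicAffine j (D h f) := by
  obtain ⟨c, t, hct⟩ := hf
  refine ⟨(∑ i, (t i : ℝ) * (h i).val) / 2, fun i => -(t i * (h i).val), fun x => ?_⟩
  rw [_root_.D, hct, hct, ← AddCircle.coe_sub]
  congr 1
  simp only [Pi.add_apply, ZMod.natCast_val_add_eq_xor, Int.cast_neg, Int.cast_mul,
    Int.cast_natCast]
  rw [pow_succ]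
  field_simp
  rw [add_sub_add_left_eq_sub, ← sum_sub_distrib, mul_sum, ← sum_add_distrib]
  exact sum_congr rfl fun i _ => by ring

lemma D_eq_zero (hf : IsDyadicAffine 0 f) (h : ι → ZMod 2) : _root_.D h f = 0 := by
  obtain ⟨c, t, hct⟩ := hf
  have hconst : ∀ x, f x = (c : AddCircle (1 : ℝ)) := fun x => by
    rw [hct, pow_zero, div_one, AddCircle.coe_add, add_eq_left, AddCircle.coe_eq_zero_iff]
    exact ⟨∑ i, t i * (x i).val, by simp⟩
  funext x
  simp [_root_.D, hconst]

lemma foldr_D {j : ℕ} (hs : List (ι → ZMod 2)) (hf : IsDyadicAffine (hs.length + j) f) :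
    IsDyadicAffine j (hs.foldr _root_.D f) := by
  induction hs generalizing j with
  | nil => simpa using hf
  | cons h hs ih => exact (ih (by simpa [add_assoc, add_comm 1] using hf)).D h

lemma isNCPoly {j : ℕ} (hf : IsDyadicAffine j f) : IsNCPoly j f := by
  rintro (_ | ⟨h, hs⟩) hlen
  · simp at hlen
  · have hs_len : hs.length = j := by simpa using hlen
    exact (foldr_D (j := 0) hs (by rwa [add_zero, hs_len])).D_eq_zero h

end IsDyadicAffine

end DyadicAffine

section Cube

variable (ι : Type*) [Fintype ι] [DecidableEq ι]

def cubeEquivFinset : (ι → ZMod 2) ≃ Finset ι where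
  toFun x := {i | x i = 1}
  invFun s i := if i ∈ s then 1 else 0
  left_inv x := by
    funext i
    have : ∀ z : ZMod 2, z ≠ 1 → z = 0 := by decide
    by_cases h : x i = 1 <;> simp [h, this]
  right_inv s := by ext i; simp

variable {ι}

lemma card_cubeEquivFinset (x : ι → ZMod 2) : #(cubeEquivFinset ι x) = ∑ i, (x i).val := by
  have : ∀ z : ZMod 2, z.val = if z = 1 then 1 else 0 := by decide
  simp only [cubeEquivFinset, Equiv.coe_fn_mk, card_filter, this]

lemma sum_cube_apply_sum_val {α : Type*} [AddCommMonoid α] (g : ℕ → α) :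
    ∑ x : ι → ZMod 2, g (∑ i, (x i).val)
      = ∑ s ∈ range (Fintype.card ι + 1), (Fintype.card ι).choose s • g s := by
  rw [Fintype.sum_equiv (cubeEquivFinset ι) _ (fun t => g #t)
    (fun x => by rw [card_cubeEquivFinset]), ← powerset_univ, sum_powerset_apply_card, card_univ]

-- Translating by the `i`-th basis vector flips the sign of the `i`-th factor only.
lemma sum_cube_sign_mul_sign {i j : ι} (hij : i ≠ j) :
    ∑ x : ι → ZMod 2, (1 - 2 * ((x i).val : ℝ)) * (1 - 2 * ((x j).val : ℝ)) = 0 := by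
  have hflip := Fintype.sum_equiv (Equiv.addRight (Pi.single i 1))
    (fun x : ι → ZMod 2 => (1 - 2 * ((x i).val : ℝ)) * (1 - 2 * ((x j).val : ℝ)))
    (fun x => -((1 - 2 * ((x i).val : ℝ)) * (1 - 2 * ((x j).val : ℝ))))
    (fun x => by
      simp only [Equiv.coe_addRight, Pi.add_apply, Pi.single_eq_same,
        Pi.single_eq_of_ne hij.symm, add_zero, ZMod.one_sub_two_mul_val_add_one]
      ring)
  rw [sum_neg_distrib] at hflip
  linarith

lemma sum_cube_sq_sum_sign :
    ∑ x : ι → ZMod 2, (∑ i, (1 - 2 * ((x i).val : ℝ))) ^ 2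
      = Fintype.card ι * 2 ^ Fintype.card ι := by
  simp_rw [sq, sum_mul_sum]
  rw [sum_comm]
  have hdiag (i : ι) : ∑ x : ι → ZMod 2, ∑ j, (1 - 2 * ((x i).val : ℝ)) * (1 - 2 * ((x j).val : ℝ))
      = 2 ^ Fintype.card ι := by
    rw [sum_comm, sum_eq_single i (fun j _ hji => sum_cube_sign_mul_sign (Ne.symm hji))
      (by simp)]
    simp only [← sq, ZMod.one_sub_two_mul_val_sq, sum_const, card_univ, Fintype.card_fun,
      ZMod.card, nsmul_eq_mul, mul_one]
    norm_cast
  simp only [hdiag, sum_const, card_univ, nsmul_eq_mul]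

end Cube

lemma sum_range_choose_mul_sq (n : ℕ) :
    ∑ s ∈ range (n + 1), (n.choose s : ℝ) * ((n : ℝ) - 2 * s) ^ 2 = (n : ℝ) * 2 ^ n := by
  have hcube := sum_cube_apply_sum_val (ι := Fin n) (fun s => ((n : ℝ) - 2 * s) ^ 2)
  simp only [Fintype.card_fin, nsmul_eq_mul] at hcube
  have hvar := sum_cube_sq_sum_sign (ι := Fin n)
  rw [Fintype.card_fin] at hvar
  rw [← hcube, ← hvar]
  congr! 2 with x
  simp only [sum_sub_distrib, ← mul_sum, sum_const, card_univ, Fintype.card_fin]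
  push_cast
  ring

lemma sum_choose_le_of_le_abs {n : ℕ} (hn : 0 < n) {t : ℝ} (ht : 0 < t) {S : Finset ℕ}
    (hS : S ⊆ range (n + 1)) (hfar : ∀ s ∈ S, t * √n ≤ |(n : ℝ) - 2 * s|) :
    ∑ s ∈ S, (n.choose s : ℝ) ≤ 2 ^ n / t ^ 2 := by
  have hn' : (0 : ℝ) < n := by exact_mod_cast hn
  have hpoint (s : ℕ) (hs : s ∈ S) :
      t ^ 2 * n * (n.choose s : ℝ) ≤ (n.choose s : ℝ) * ((n : ℝ) - 2 * s) ^ 2 := by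
    have hsq := pow_le_pow_left₀ (by positivity) (hfar s hs) 2
    rw [mul_pow, Real.sq_sqrt hn'.le, sq_abs] at hsq
    nlinarith [(n.choose s).cast_nonneg (α := ℝ)]
  have hsum : t ^ 2 * n * ∑ s ∈ S, (n.choose s : ℝ) ≤ n * 2 ^ n :=
    calc t ^ 2 * n * ∑ s ∈ S, (n.choose s : ℝ)
        ≤ ∑ s ∈ S, (n.choose s : ℝ) * ((n : ℝ) - 2 * s) ^ 2 := by
          rw [mul_sum]; exact sum_le_sum hpoint
      _ ≤ ∑ s ∈ range (n + 1), (n.choose s : ℝ) * ((n : ℝ) - 2 * s) ^ 2 :=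
          sum_le_sum_of_subset_of_nonneg hS fun _ _ _ => by positivity
      _ = n * 2 ^ n := sum_range_choose_mul_sq n
  rw [le_div_iff₀ (by positivity)]
  nlinarith

lemma Nat.two_mul_add_one_mul_centralBinom_sq_le (m : ℕ) :
    (2 * m + 1) * m.centralBinom ^ 2 ≤ 16 ^ m := by
  induction m with
  | zero => simp
  | succ m ih =>
    refine Nat.le_of_mul_le_mul_left (c := (m + 1) ^ 2) ?_ (by positivity)
    calc (m + 1) ^ 2 * ((2 * (m + 1) + 1) * (m + 1).centralBinom ^ 2)
        = (2 * m + 3) * ((m + 1) * (m + 1).centralBinom) ^ 2 := by ring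
      _ = 4 * (2 * m + 3) * (2 * m + 1) * ((2 * m + 1) * m.centralBinom ^ 2) := by
          rw [Nat.succ_mul_centralBinom_succ]; ring
      _ ≤ 4 * (2 * m + 3) * (2 * m + 1) * 16 ^ m := by gcongr
      _ ≤ ((m + 1) ^ 2 * 16) * 16 ^ m := Nat.mul_le_mul_right _ (by nlinarith)
      _ = (m + 1) ^ 2 * 16 ^ (m + 1) := by ring

lemma choose_middle_le_four_pow_div_sqrt (m : ℕ) :
    ((2 * m).choose m : ℝ) ≤ 4 ^ m / √(2 * m + 1) := by
  rw [← Nat.centralBinom_eq_two_mul_choose, le_div_iff₀ (by positivity)]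
  have h : ((2 * m + 1) * m.centralBinom ^ 2 : ℝ) ≤ 16 ^ m := by
    exact_mod_cast Nat.two_mul_add_one_mul_centralBinom_sq_le m
  calc (m.centralBinom : ℝ) * √(2 * m + 1) = √((2 * m + 1) * m.centralBinom ^ 2) := by
        rw [Real.sqrt_mul (by positivity), Real.sqrt_sq (by positivity), mul_comm]
    _ ≤ √(16 ^ m) := Real.sqrt_le_sqrt h
    _ = 4 ^ m := by
        rw [show (16 : ℝ) ^ m = (4 ^ m) ^ 2 by rw [← pow_mul, mul_comm, pow_mul]; norm_num,
          Real.sqrt_sq (by positivity)]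

lemma Finset.sum_range_two_mul_add_one {M : Type*} [AddCommMonoid M] (F : ℕ → M) (m : ℕ) :
    ∑ j ∈ range (2 * m + 1), F j = ∑ j ∈ range m, (F j + F (2 * m - j)) + F m := by
  rw [show 2 * m + 1 = m + (m + 1) by ring, sum_range_add, sum_add_distrib,
    sum_range_succ', add_zero, add_assoc]
  congr 2
  rw [← sum_range_reflect]
  exact sum_congr rfl fun j hj => congrArg F (by rw [mem_range] at hj; omega)

lemma two_mul_sum_range_choose_add_choose_middle (m : ℕ) :
    2 * ∑ j ∈ range m, ((2 * m).choose j : ℝ) + (2 * m).choose m = 4 ^ m := by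
  have htotal : ∑ j ∈ range (2 * m + 1), ((2 * m).choose j : ℝ) = 4 ^ m := by
    rw [show (4 : ℝ) ^ m = 2 ^ (2 * m) by rw [pow_mul]; norm_num]
    exact_mod_cast Nat.sum_range_choose (2 * m)
  rw [← htotal, sum_range_two_mul_add_one, mul_sum]
  congr 1
  refine sum_congr rfl fun j hj => ?_
  rw [Nat.choose_symm (by rw [mem_range] at hj; omega)]
  ring

lemma sum_choose_filter_sub_le_mul_sqrt (m : ℕ) {r : ℝ} (hr : 0 ≤ r) :
    ∑ j ∈ (range m).filter (fun j : ℕ => (m : ℝ) - j ≤ r * √(2 * m)), ((2 * m).choose j : ℝ)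
      ≤ r * 4 ^ m := by
  set b := ⌊r * √(2 * m)⌋₊
  have hsub : (range m).filter (fun j : ℕ => (m : ℝ) - j ≤ r * √(2 * m)) ⊆ Ico (m - b) m := by
    intro j hj
    rw [mem_filter, mem_range] at hj
    have : m - j ≤ b := Nat.le_floor (by rw [Nat.cast_sub hj.1.le]; exact hj.2)
    rw [mem_Ico]
    omega
  have hratio : √(2 * m) / √(2 * m + 1) ≤ 1 :=
    div_le_one_of_le₀ (Real.sqrt_le_sqrt (by linarith)) (Real.sqrt_nonneg _)
  calc _ ≤ ∑ j ∈ Ico (m - b) m, ((2 * m).choose j : ℝ) :=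
        sum_le_sum_of_subset_of_nonneg hsub fun _ _ _ => by positivity
    _ ≤ ∑ j ∈ Ico (m - b) m, ((2 * m).choose m : ℝ) := sum_le_sum fun j _ => by
        exact_mod_cast (Nat.choose_le_centralBinom j m).trans_eq m.centralBinom_eq_two_mul_choose
    _ = (m - (m - b) : ℕ) * ((2 * m).choose m : ℝ) := by simp
    _ ≤ (r * √(2 * m)) * (4 ^ m / √(2 * m + 1)) := by
        gcongr
        · exact (Nat.cast_le.mpr (by omega : m - (m - b) ≤ b)).trans (Nat.floor_le (by positivity))
        · exact choose_middle_le_four_pow_div_sqrt m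
    _ = r * 4 ^ m * (√(2 * m) / √(2 * m + 1)) := by ring
    _ ≤ r * 4 ^ m := mul_le_of_le_one_right (by positivity) hratio

lemma sum_choose_filter_lt_sub_le {m : ℕ} (hm : 0 < m) {t : ℝ} (ht : 0 < t) :
    ∑ j ∈ (range m).filter (fun j : ℕ => t * √(2 * m) < (m : ℝ) - j), ((2 * m).choose j : ℝ)
      ≤ 4 ^ m / (4 * t ^ 2) := by
  have hcheb := sum_choose_le_of_le_abs (n := 2 * m) (by omega) (t := 2 * t) (by positivity)
    (S := (range m).filter (fun j : ℕ => t * √(2 * m) < (m : ℝ) - j))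
    (fun j hj => by rw [mem_filter, mem_range] at hj; rw [mem_range]; omega)
    (fun j hj => by
      rw [mem_filter] at hj
      push_cast
      rw [abs_of_nonneg (by linarith [hj.2, mul_nonneg ht.le (Real.sqrt_nonneg (2 * m : ℝ))])]
      linarith [hj.2])
  convert hcheb using 1
  rw [show (4 : ℝ) ^ m = 2 ^ (2 * m) by rw [pow_mul]; norm_num]
  ring

open Real in
lemma sin_pi_div_320_ge : (49 / 5000 : ℝ) ≤ sin (π / 320) := by
  have hx : 0 < π / 320 := by positivity
  have hcube : (π / 320) ^ 3 ≤ (1 / 100 : ℝ) ^ 3 :=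
    pow_le_pow_left₀ hx.le (by linarith [pi_lt_d2]) 3
  linarith [sin_gt_sub_cube hx, pi_gt_d2]

open Real in
lemma sin_mul_nonneg_of_le {r φ d : ℝ} (hr : 0 < r) (hφ₀ : 0 ≤ φ) (hφ : φ ≤ π / (10 * r))
    (hd₀ : 0 ≤ d) (hd : d ≤ 10 * r) : 0 ≤ sin (φ * d) := by
  refine sin_nonneg_of_nonneg_of_le_pi (mul_nonneg hφ₀ hd₀) ?_
  calc φ * d ≤ π / (10 * r) * (10 * r) := by gcongr
    _ = π := by field_simp

open Real in
lemma sin_pi_div_320_le_sin_mul {r φ d : ℝ} (hr : 0 < r) (hφ₁ : π / (40 * r) ≤ φ)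
    (hφ₂ : φ ≤ π / (10 * r)) (hd₁ : r / 8 ≤ d) (hd₂ : d ≤ 5 * r) :
    sin (π / 320) ≤ sin (φ * d) := by
  refine sin_le_sin_of_le_of_le_pi_div_two (by linarith [pi_pos]) ?_ ?_
  · calc φ * d ≤ π / (10 * r) * (5 * r) := by gcongr; linarith
      _ = π / 2 := by field_simp; ring
  · calc π / 320 = π / (40 * r) * (r / 8) := by field_simp; ring
      _ ≤ φ * d := by gcongr; exact (div_pos pi_pos (by positivity)).le.trans hφ₁

open Real in
lemma sum_choose_mul_sin_ge {m : ℕ} (hm : 200 ≤ m) {φ : ℝ}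
    (hφ₁ : π / (40 * √(2 * m)) ≤ φ) (hφ₂ : φ ≤ π / (10 * √(2 * m))) :
    4 ^ m / 2000 ≤ ∑ j ∈ range m, ((2 * m).choose j : ℝ) * sin (φ * (m - j)) := by
  have hr : 20 ≤ √(2 * m) := by
    rw [show (20 : ℝ) = √(20 ^ 2) by rw [Real.sqrt_sq (by norm_num)]]
    exact Real.sqrt_le_sqrt (by norm_cast; omega)
  have hr0 : 0 < √(2 * m) := by linarith
  have hφ₀ : 0 ≤ φ := le_trans (by positivity) hφ₁
  have hpoint : ∀ j ∈ range m,
      49 / 5000 * ((2 * m).choose j : ℝ)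
        - 49 / 5000 * (if (m : ℝ) - j ≤ 1 / 8 * √(2 * m) then ((2 * m).choose j : ℝ) else 0)
        - 49 / 5000 * (if 5 * √(2 * m) < (m : ℝ) - j then ((2 * m).choose j : ℝ) else 0)
        - (if 10 * √(2 * m) < (m : ℝ) - j then ((2 * m).choose j : ℝ) else 0)
      ≤ ((2 * m).choose j : ℝ) * sin (φ * (m - j)) := by
    intro j hj
    have hd₀ : (0 : ℝ) ≤ m - j := sub_nonneg.mpr (by exact_mod_cast (mem_range.mp hj).le)
    have hC : (0 : ℝ) ≤ (2 * m).choose j := by positivity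
    by_cases h₁ : (m : ℝ) - j ≤ 1 / 8 * √(2 * m)
    · rw [if_pos h₁, if_neg (not_lt.mpr (by linarith)), if_neg (not_lt.mpr (by linarith))]
      nlinarith [sin_mul_nonneg_of_le hr0 hφ₀ hφ₂ hd₀ (by linarith)]
    rw [if_neg h₁]
    by_cases h₂ : 5 * √(2 * m) < (m : ℝ) - j
    · rw [if_pos h₂]
      by_cases h₃ : 10 * √(2 * m) < (m : ℝ) - j
      · rw [if_pos h₃]
        nlinarith [neg_one_le_sin (φ * (m - j))]
      · rw [if_neg h₃]
        nlinarith [sin_mul_nonneg_of_le hr0 hφ₀ hφ₂ hd₀ (not_lt.mp h₃)]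
    · rw [if_neg h₂, if_neg (not_lt.mpr (by linarith))]
      nlinarith [sin_pi_div_320_ge,
        sin_pi_div_320_le_sin_mul hr0 hφ₁ hφ₂ (by linarith) (not_lt.mp h₂)]
  have hsum := sum_le_sum hpoint
  simp only [sum_sub_distrib, ← mul_sum, ← sum_filter] at hsum
  have hhalf := two_mul_sum_range_choose_add_choose_middle m
  have hmiddle : ((2 * m).choose m : ℝ) ≤ 4 ^ m / 20 :=
    (choose_middle_le_four_pow_div_sqrt m).trans
      (div_le_div_of_nonneg_left (by positivity) (by norm_num)
        (hr.trans (Real.sqrt_le_sqrt (by linarith))))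
  have hnear := sum_choose_filter_sub_le_mul_sqrt m (r := 1 / 8) (by norm_num)
  have hfar₅ := sum_choose_filter_lt_sub_le (m := m) (by omega) (t := 5) (by norm_num)
  have hfar₁₀ := sum_choose_filter_lt_sub_le (m := m) (by omega) (t := 10) (by norm_num)
  have h4m : (0 : ℝ) < 4 ^ m := by positivity
  rw [show (4 : ℝ) * 5 ^ 2 = 100 by norm_num] at hfar₅
  rw [show (4 : ℝ) * 10 ^ 2 = 400 by norm_num] at hfar₁₀
  linarith

open Complex in
lemma sum_choose_sign_mul_exp (m : ℕ) (φ : ℝ) :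
    ∑ s ∈ range (2 * m + 1),
        ((2 * m).choose s : ℂ) * ((if 2 * s ≤ 2 * m then 1 else -1) * exp (↑(φ * (s - m)) * I))
      = (2 * m).choose m
          - 2 * I * ↑(∑ j ∈ range m, ((2 * m).choose j : ℝ) * Real.sin (φ * (m - j))) := by
  rw [sum_range_two_mul_add_one, if_pos le_rfl, sub_self, mul_zero, ofReal_zero, zero_mul,
    exp_zero, one_mul, mul_one, add_comm, sub_eq_add_neg, ofReal_sum, mul_sum, ← sum_neg_distrib]
  congr 1
  refine sum_congr rfl fun j hj => ?_
  rw [mem_range] at hj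
  have hpair : exp (-↑(φ * (m - j)) * I) - exp (↑(φ * (m - j)) * I)
      = -2 * I * ↑(Real.sin (φ * (m - j))) := by
    rw [exp_mul_I, exp_mul_I, cos_neg, sin_neg, ofReal_sin]; ring
  rw [if_pos (by omega), if_neg (by omega), Nat.choose_symm (by omega), Nat.cast_sub (by omega),
    show φ * ((j : ℝ) - m) = -(φ * (m - j)) by ring,
    show φ * (((2 * m : ℕ) : ℝ) - j - m) = φ * (m - j) by push_cast; ring, ofReal_neg]
  push_cast at hpair ⊢
  linear_combination ((2 * m).choose j : ℂ) * hpair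

lemma abs_le_norm_sub_two_mul_I_mul (a q : ℝ) :
    |a| ≤ ‖(a : ℂ) - 2 * Complex.I * q‖ ∧ 2 * |q| ≤ ‖(a : ℂ) - 2 * Complex.I * q‖ := by
  constructor
  · simpa using Complex.abs_re_le_norm ((a : ℂ) - 2 * Complex.I * q)
  · simpa [abs_mul] using Complex.abs_im_le_norm ((a : ℂ) - 2 * Complex.I * q)

lemma four_pow_div_le_choose_middle {m : ℕ} (hm : 2 * m + 1 ≤ 1000) :
    (4 : ℝ) ^ m / 1000 ≤ (2 * m).choose m := by
  have hcentral : (4 : ℝ) ^ m ≤ (2 * m + 1) * (2 * m).choose m := by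
    exact_mod_cast Nat.four_pow_le_two_mul_add_one_mul_central_binom m
  have hm' : (2 * m + 1 : ℝ) ≤ 1000 := by exact_mod_cast hm
  rw [div_le_iff₀ (by norm_num)]
  nlinarith [((2 * m).choose m).cast_nonneg (α := ℝ)]

open Real in
lemma two_pi_mul_div_mem_Icc {r P A : ℝ} (hr : 0 < r) (hP₁ : r ^ 2 ≤ P) (hP₂ : P ≤ 2 * r ^ 2)
    (hA₁ : r / 40 ≤ A) (hA₂ : A ≤ r / 20) :
    π / (40 * r) ≤ 2 * π * A / P ∧ 2 * π * A / P ≤ π / (10 * r) := by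
  have hP : 0 < P := by nlinarith
  constructor
  · rw [div_le_div_iff₀ (by positivity) hP]
    calc π * P ≤ π * (2 * r ^ 2) := by gcongr
      _ = 2 * π * (r / 40) * (40 * r) := by ring
      _ ≤ 2 * π * A * (40 * r) := by gcongr
  · rw [div_le_div_iff₀ hP (by positivity)]
    calc 2 * π * A * (10 * r) ≤ 2 * π * (r / 20) * (10 * r) := by gcongr
      _ = π * r ^ 2 := by ring
      _ ≤ π * P := by gcongr

open Real in
lemma four_pow_div_le_norm_correlation {m k : ℕ} (hm : 0 < m) (hk₁ : 2 * m ≤ 2 ^ k)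
    (hk₂ : 2 ^ k ≤ 4 * m) :
    4 ^ m / 1000 ≤ ‖((2 * m).choose m : ℂ) - 2 * Complex.I *
      ↑(∑ j ∈ range m, ((2 * m).choose j : ℝ) *
        sin (2 * π * ⌊1 / 20 * √(2 * m)⌋ / 2 ^ k * (m - j)))‖ := by
  set A := ⌊1 / 20 * √(2 * m)⌋
  obtain ⟨hre, him⟩ := abs_le_norm_sub_two_mul_I_mul ((2 * m).choose m)
    (∑ j ∈ range m, ((2 * m).choose j : ℝ) * sin (2 * π * A / 2 ^ k * (m - j)))
  rw [Complex.ofReal_natCast] at hre him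
  have hsq : √(2 * m) ^ 2 = 2 * m := Real.sq_sqrt (by positivity)
  have hA_le : (A : ℝ) ≤ 1 / 20 * √(2 * m) := Int.floor_le _
  have hA_gt : 1 / 20 * √(2 * m) - 1 < A := Int.sub_one_lt_floor _
  rcases le_or_gt A 0 with hA | hA
  · have hA' : (A : ℝ) ≤ 0 := by exact_mod_cast hA
    have hsmall : 2 * m + 1 ≤ 1000 := by
      have : (2 * m : ℝ) < 400 := by nlinarith [Real.sqrt_nonneg (2 * m : ℝ)]
      exact_mod_cast (by linarith : (2 * m + 1 : ℝ) ≤ 1000)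
    rw [abs_of_nonneg (by positivity)] at hre
    exact (four_pow_div_le_choose_middle hsmall).trans hre
  · have hA₁ : (1 : ℝ) ≤ A := by exact_mod_cast hA
    have hr : 20 ≤ √(2 * m) := by linarith
    have hA₂ : √(2 * m) / 40 ≤ A := by rcases le_total (√(2 * m)) 40 with h | h <;> linarith
    have hm200 : 200 ≤ m := by
      have : (400 : ℝ) ≤ 2 * m := by nlinarith
      exact_mod_cast (by linarith : (200 : ℝ) ≤ m)
    obtain ⟨hφ₁, hφ₂⟩ := two_pi_mul_div_mem_Icc (by positivity) (P := 2 ^ k)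
      (by rw [hsq]; exact_mod_cast hk₁)
      (by rw [hsq]; exact_mod_cast (by omega : 2 ^ k ≤ 2 * (2 * m))) hA₂ (by linarith)
    have hQ := sum_choose_mul_sin_ge hm200 hφ₁ hφ₂
    rw [abs_of_nonneg (by linarith [show (0 : ℝ) < 4 ^ m by positivity])] at him
    linarith

lemma Nat.two_pow_clog_two_lt {n : ℕ} (hn : 1 < n) : 2 ^ Nat.clog 2 n < 2 * n := by
  have := Nat.pow_pred_clog_lt_self one_lt_two hn
  rw [← Nat.succ_pred_eq_of_pos (Nat.clog_pos one_lt_two hn), pow_succ]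
  omega

lemma sum_cube_sign_mul_exp (m : ℕ) (φ : ℝ) :
    ∑ x : Fin (2 * m) → ZMod 2, (if 2 * ∑ i, (x i).val ≤ 2 * m then (1 : ℂ) else -1) *
        Complex.exp (↑(φ * (↑(∑ i, (x i).val) - m)) * Complex.I)
      = (2 * m).choose m
          - 2 * Complex.I * ↑(∑ j ∈ range m, ((2 * m).choose j : ℝ) * Real.sin (φ * (m - j))) := by
  rw [sum_cube_apply_sum_val
    (fun s => (if 2 * s ≤ 2 * m then (1 : ℂ) else -1) * Complex.exp (↑(φ * (s - m)) * Complex.I)),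
    Fintype.card_fin, ← sum_choose_sign_mul_exp]
  simp only [nsmul_eq_mul]

lemma e_coe (r : ℝ) : e (r : AddCircle (1 : ℝ)) = Complex.exp (↑(2 * Real.pi * r) * Complex.I) := by
  show Complex.exp (2 * (Real.pi : ℂ) * Complex.I * r) = _
  push_cast
  ring_nf

/-- There is a nonclassical polynomial of degree `≤ log₂ n + 1`, of the form
`A(∑|x_i| - n/2)/2^k mod 1` with `A = ⌊a√n⌋` and `2^{k-1} < n ≤ 2^k`, having
constant correlation with the majority function. -/
theorem stmt10 : ∃ c : ℝ, 0 < c ∧ ∃ a : ℝ, 0 < a ∧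
    ∀ n : ℕ, Even n → 0 < n →
    ∃ k : ℕ, 2 ^ (k - 1) < n ∧ n ≤ 2 ^ k ∧
      ∀ f : (Fin n → ZMod 2) → AddCircle (1 : ℝ),
        (∀ x, f x =
          ((((⌊a * Real.sqrt n⌋ : ℝ) * ((∑ i, ((x i).val : ℝ)) - (n : ℝ) / 2)) / 2 ^ k : ℝ)
            : AddCircle (1 : ℝ))) →
        IsNCPoly (Nat.log 2 n + 1) f ∧
        c ≤ ‖
          ((∑ x : Fin n → ZMod 2,
              (if 2 * ∑ i, (x i).val ≤ n then (1 : ℂ) else -1) * e (f x)) / 2 ^ n)‖ := by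
  refine ⟨1 / 1000, by norm_num, 1 / 20, by norm_num, fun n hn hn0 => ?_⟩
  obtain ⟨m, rfl⟩ := hn.two_dvd
  have hk₁ : 2 ^ (Nat.clog 2 (2 * m) - 1) < 2 * m := Nat.pow_pred_clog_lt_self one_lt_two (by omega)
  have hk₂ : 2 * m ≤ 2 ^ Nat.clog 2 (2 * m) := Nat.le_pow_clog one_lt_two _
  refine ⟨Nat.clog 2 (2 * m), hk₁, hk₂, fun f hf => ⟨?_, ?_⟩⟩
  · have hf' : IsDyadicAffine (Nat.clog 2 (2 * m)) f :=
      ⟨-(⌊1 / 20 * √((2 * m : ℕ) : ℝ)⌋ * m), fun _ => ⌊1 / 20 * √((2 * m : ℕ) : ℝ)⌋, fun x => by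
        rw [hf, ← mul_sum]; push_cast; ring_nf⟩
    exact hf'.isNCPoly.mono
      (Nat.clog_le_of_le_pow (Nat.lt_pow_succ_log_self one_lt_two _).le)
  · set φ := 2 * Real.pi * ⌊1 / 20 * √(2 * m : ℝ)⌋ / 2 ^ Nat.clog 2 (2 * m)
    have hterm (x : Fin (2 * m) → ZMod 2) :
        e (f x) = Complex.exp (↑(φ * (↑(∑ i, (x i).val) - m)) * Complex.I) := by
      rw [hf, e_coe]; congr 3; push_cast; ring
    have hk₃ : 2 ^ Nat.clog 2 (2 * m) ≤ 4 * m := by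
      have := Nat.two_pow_clog_two_lt (show 1 < 2 * m by omega); omega
    simp only [hterm, sum_cube_sign_mul_exp, norm_div, norm_pow, Complex.norm_ofNat]
    rw [le_div_iff₀ (by positivity), pow_mul, show (2 : ℝ) ^ 2 = 4 by norm_num]
    exact le_of_eq_of_le (by ring) (four_pow_div_le_norm_correlation (by omega) hk₂ hk₃)
end

section
/- Let p₁,…,p_r be distinct primes with p = max p_i, and let f_i : (ZMod p_i)^n → ℝ/ℤ be nonclassical polynomials which weakly represent OR: f_i(0^n) = 0 for all i, and for each nonzero x ∈ {0,1}^n some f_i(x) ≠ 0. Then max_i deg(f_i) ≥ Ω((log_p n)^{1/r}); concretely, if all degrees are at most d then n < 2^{4(d+1)^r log₂ p}. -/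
open Finset

/-!
A nonclassical polynomial `f` of degree `≤ d` over `(ZMod p)^n` with `f 0 = 0` takes values in
`p^{-d} ℤ / ℤ`, and along a combinatorial cube `S ↦ b + ∑_{j ∈ S} v j` its Möbius coefficients
vanish above dimension `d`. Writing them as `a T / p^d`, `f` vanishes at the vertex `S` iff
`p^d ∣ ∑_{T ⊆ S} a T`, and by the theorems of Lucas and Fermat this indicator is a polynomial of
degree `< d p^d` in the indicator vector of `S`. A Chevalley–Warning argument therefore finds, in
any window of `(m q²)^d` fresh points, a nonempty block extending a cube with fewer than `m` blocks
on which `f` vanishes. Treating one modulus after another, the blocks of one stage being the points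
of the next, `n ≥ q^{2(d+1)^r}` coordinates would give a nonempty `X ⊆ [n]` on which every `fᵢ`
vanishes, which weak representation of OR forbids.
-/

section FiniteDifferences

variable {V M : Type*} [AddCommGroup V] [AddCommGroup M] {d : ℕ} {f : V → M}

lemma IsNCPoly.D_succ (hf : IsNCPoly (d + 1) f) (h : V) : IsNCPoly d (D h f) := fun hs hlen => by
  simpa [List.foldr_append] using hf (hs ++ [h]) (by simp [hlen])

lemma IsNCPoly.pow_smul_iterate_D_eq_zero {p : ℕ} (hV : ∀ x : V, p • x = 0) (hf : IsNCPoly d f)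
    (h : V) (i : ℕ) (x : V) : p ^ d • (D h)^[i + 1] f x = 0 := by
  induction d generalizing f i x with
  | zero =>
    have hD0 : D h (0 : V → M) = 0 := by funext; simp [D]
    have hf' : D h f = 0 := hf [h] rfl
    rw [Function.iterate_succ_apply, hf', Function.iterate_fixed hD0]
    simp
  | succ d ih =>
    set g := (D h)^[i] f
    -- Newton's formula for `g (x + p • h) = g x`
    have newton : ∑ k ∈ range p, p.choose (k + 1) • (D h)^[k + 1] g x = 0 := by
      have := shift_eq_sum_fwdDiff_iter h g p x
      rw [hV, add_zero, sum_range_succ', Nat.choose_zero_right, Function.iterate_zero_apply,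
        one_smul, right_eq_add] at this
      exact this
    have higher : ∀ k ∈ range p, k ≠ 0 → p ^ d • p.choose (k + 1) • (D h)^[k + 1] g x = 0 := by
      intro k _ hk
      have : (D h)^[k + 1] g = (D h)^[(k - 1 + i) + 1] (D h f) := by
        simp only [g, ← Function.iterate_add_apply, ← Function.iterate_succ_apply]
        congr 1; omega
      rw [this, smul_comm, ih (hf.D_succ h), smul_zero]
    have := congrArg (p ^ d • ·) newton
    simp only [smul_sum, smul_zero] at this
    rw [sum_eq_single 0 higher (by rintro h0; simp_all)] at this
    rw [pow_succ, mul_smul, Function.iterate_succ_apply']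
    simpa [g] using this

lemma IsNCPoly.pow_smul_apply_add {p : ℕ} (hV : ∀ x : V, p • x = 0) (hf : IsNCPoly d f)
    (x h : V) : p ^ d • f (x + h) = p ^ d • f x := by
  have := hf.pow_smul_iterate_D_eq_zero hV h 0 x
  rwa [Function.iterate_one, D, smul_sub, sub_eq_zero] at this

end FiniteDifferences

section Moebius

variable {ι M : Type*} [AddCommGroup M]

noncomputable def moebiusCoeff (g : Finset ι → M) (T : Finset ι) : M :=
  ∑ Q ∈ T.powerset, (-1 : ℤ) ^ (T.card + Q.card) • g Q

variable [DecidableEq ι]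

lemma moebiusCoeff_insert (g : Finset ι → M) {a : ι} {T : Finset ι} (ha : a ∉ T) :
    moebiusCoeff g (insert a T) = moebiusCoeff (fun Q => g (insert a Q)) T - moebiusCoeff g T := by
  have notMem : ∀ Q ∈ T.powerset, a ∉ Q := fun Q hQ haQ => ha (mem_powerset.mp hQ haQ)
  rw [moebiusCoeff, sum_powerset_insert ha, moebiusCoeff, moebiusCoeff, sub_eq_add_neg, add_comm,
    ← sum_neg_distrib]
  congr 1 <;> refine sum_congr rfl fun Q hQ => ?_
  · rw [card_insert_of_notMem (notMem Q hQ), card_insert_of_notMem ha]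
    congr 1; ring
  · rw [card_insert_of_notMem ha, ← neg_smul]
    congr 1; ring

lemma sum_powerset_moebiusCoeff (g : Finset ι → M) (S : Finset ι) :
    ∑ T ∈ S.powerset, moebiusCoeff g T = g S := by
  induction S using Finset.induction_on generalizing g with
  | empty => simp [moebiusCoeff]
  | insert a S ha ih =>
    rw [sum_powerset_insert ha, ← ih (fun Q => g (insert a Q)), ← sum_add_distrib]
    refine sum_congr rfl fun T hT => ?_
    rw [moebiusCoeff_insert g fun h => ha (mem_powerset.mp hT h)]
    abel

end Moebius

section CubeVanishing

variable {ι V M : Type*} [DecidableEq ι] [AddCommGroup V] [AddCommGroup M] {d : ℕ} {f : V → M}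

lemma moebiusCoeff_insert_apply_add_sum (f : V → M) (v : ι → V) (x : V) {a : ι} {T : Finset ι}
    (ha : a ∉ T) :
    moebiusCoeff (fun Q => f (x + ∑ j ∈ Q, v j)) (insert a T) =
      moebiusCoeff (fun Q => D (v a) f (x + ∑ j ∈ Q, v j)) T := by
  rw [moebiusCoeff_insert _ ha, moebiusCoeff, moebiusCoeff, moebiusCoeff, ← sum_sub_distrib]
  refine sum_congr rfl fun Q hQ => ?_
  rw [sum_insert fun h => ha (mem_powerset.mp hQ h), D, smul_sub, add_comm (v a), add_assoc]

lemma IsNCPoly.moebiusCoeff_eq_zero (hf : IsNCPoly d f) (v : ι → V) (x : V) {T : Finset ι}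
    (hT : d < T.card) : moebiusCoeff (fun Q => f (x + ∑ j ∈ Q, v j)) T = 0 := by
  induction T using Finset.induction_on generalizing d f x with
  | empty => simp at hT
  | insert a T ha ih =>
    rw [moebiusCoeff_insert_apply_add_sum f v x ha]
    rw [card_insert_of_notMem ha] at hT
    cases d with
    | zero => simp [moebiusCoeff, show D (v a) f = 0 from hf [v a] rfl]
    | succ d => exact ih (hf.D_succ (v a)) x (by omega)

lemma IsNCPoly.apply_sum_eq_zero_of_forall_card_le (hf : IsNCPoly d f) (v : ι → V)
    {K : Finset ι} (h : ∀ Q ⊆ K, Q.card ≤ d → f (∑ j ∈ Q, v j) = 0) :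
    f (∑ j ∈ K, v j) = 0 := by
  rw [← sum_powerset_moebiusCoeff (fun Q => f (∑ j ∈ Q, v j)) K]
  refine sum_eq_zero fun T hT => ?_
  rw [mem_powerset] at hT
  by_cases hTd : d < T.card
  · simpa using hf.moebiusCoeff_eq_zero v 0 hTd
  · refine sum_eq_zero fun Q hQ => ?_
    rw [mem_powerset] at hQ
    simp only [h Q (hQ.trans hT) ((card_le_card hQ).trans (by omega)), smul_zero]

lemma IsNCPoly.apply_sum_eq_zero_of_subset_insert (hf : IsNCPoly d f) (w : ι → V) {Y : Finset ι}
    {y₀ : ι} (hY : ∀ K ⊆ Y, f (∑ j ∈ K, w j) = 0)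
    (hy₀ : ∀ K ⊆ Y, K.card < d → f (w y₀ + ∑ j ∈ K, w j) = 0) {K : Finset ι}
    (hK : K ⊆ insert y₀ Y) : f (∑ j ∈ K, w j) = 0 := by
  refine hf.apply_sum_eq_zero_of_forall_card_le w fun Q hQK hQd => ?_
  by_cases hy : y₀ ∈ Q
  · rw [← insert_erase hy, sum_insert (notMem_erase y₀ Q)]
    refine hy₀ _ (fun j hj => ?_) ?_
    · exact (mem_insert.mp (hQK.trans hK (mem_of_mem_erase hj))).resolve_left (ne_of_mem_erase hj)
    · rw [card_erase_of_mem hy]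
      have := card_pos.mpr ⟨y₀, hy⟩
      omega
  · exact hY Q ((subset_insert_iff_of_notMem hy).mp (hQK.trans hK))

end CubeVanishing

section BoolDegree

variable (R : Type*) {α : Type*} [CommRing R] [DecidableEq α]

def boolMonomial (U : Finset α) : Finset α → R := fun S => if U ⊆ S then 1 else 0

/-- Viewing `S` as its indicator vector `x ∈ {0,1}^α`, `boolMonomial R U` is the monomial
`∏_{i ∈ U} xᵢ`; so these are the functions given by polynomials of degree at most `D`. -/
def boolDegLE (α : Type*) [DecidableEq α] (D : ℕ) : Submodule R (Finset α → R) :=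
  Submodule.span R {g | ∃ U : Finset α, U.card ≤ D ∧ boolMonomial R U = g}

variable {R}

lemma boolMonomial_mul (U U' : Finset α) :
    boolMonomial R U * boolMonomial R U' = boolMonomial R (U ∪ U') := by
  funext S
  by_cases h : U ⊆ S <;> by_cases h' : U' ⊆ S <;> simp [boolMonomial, h, h', union_subset_iff]

lemma boolMonomial_mem_boolDegLE {U : Finset α} {D : ℕ} (hU : U.card ≤ D) :
    boolMonomial R U ∈ boolDegLE R α D :=
  Submodule.subset_span ⟨U, hU, rfl⟩

lemma one_mem_boolDegLE (D : ℕ) : (1 : Finset α → R) ∈ boolDegLE R α D := by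
  convert boolMonomial_mem_boolDegLE (R := R) (U := ∅) (by simp : (∅ : Finset α).card ≤ D)
  funext S; simp [boolMonomial]

lemma boolDegLE_mul_le (D₁ D₂ : ℕ) :
    boolDegLE R α D₁ * boolDegLE R α D₂ ≤ boolDegLE R α (D₁ + D₂) := by
  rw [boolDegLE, boolDegLE, Submodule.span_mul_span, Submodule.span_le]
  rintro _ ⟨_, ⟨U, hU, rfl⟩, _, ⟨U', hU', rfl⟩, rfl⟩
  show boolMonomial R U * boolMonomial R U' ∈ _
  rw [boolMonomial_mul]
  exact boolMonomial_mem_boolDegLE ((card_union_le U U').trans (add_le_add hU hU'))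

lemma mul_mem_boolDegLE {g₁ g₂ : Finset α → R} {D₁ D₂ : ℕ} (h₁ : g₁ ∈ boolDegLE R α D₁)
    (h₂ : g₂ ∈ boolDegLE R α D₂) : g₁ * g₂ ∈ boolDegLE R α (D₁ + D₂) :=
  boolDegLE_mul_le D₁ D₂ (Submodule.mul_mem_mul h₁ h₂)

lemma prod_mem_boolDegLE {β : Type*} (s : Finset β) {g : β → Finset α → R} {D : β → ℕ}
    (h : ∀ i ∈ s, g i ∈ boolDegLE R α (D i)) : ∏ i ∈ s, g i ∈ boolDegLE R α (∑ i ∈ s, D i) := by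
  classical
  induction s using Finset.induction_on with
  | empty => simpa using one_mem_boolDegLE 0
  | insert a s ha ih =>
    rw [prod_insert ha, sum_insert ha]
    exact mul_mem_boolDegLE (h a (mem_insert_self a s)) (ih fun i hi => h i (mem_insert_of_mem hi))

lemma sum_powerset_neg_one_pow_mul_eq_zero {g : Finset α → R} {D : ℕ}
    (hg : g ∈ boolDegLE R α D) {W : Finset α} (hW : D < W.card) :
    ∑ S ∈ W.powerset, (-1 : R) ^ S.card * g S = 0 := by
  induction hg using Submodule.span_induction with
  | mem g hg =>
    obtain ⟨U, hU, rfl⟩ := hg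
    obtain ⟨a, haW, haU⟩ : ∃ a ∈ W, a ∉ U := by
      by_contra! h
      exact absurd (card_le_card h) (by omega)
    rw [← insert_erase haW, sum_powerset_insert (notMem_erase a W), ← sum_add_distrib]
    refine sum_eq_zero fun S hS => ?_
    have haS : a ∉ S := fun h => notMem_erase a W (mem_powerset.mp hS h)
    by_cases hUS : U ⊆ S <;>
      simp [boolMonomial, card_insert_of_notMem haS, pow_succ, subset_insert_iff_of_notMem haU, hUS]
  | zero => simp
  | add g₁ g₂ _ _ h₁ h₂ => simp [mul_add, sum_add_distrib, h₁, h₂]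
  | smul c g _ h => simp [mul_left_comm _ c, ← mul_sum, h]

end BoolDegree

section BinomialIndicators

variable {R α : Type*} [CommRing R] [DecidableEq α]

lemma pow_mem_boolDegLE {g : Finset α → R} {D : ℕ} (hg : g ∈ boolDegLE R α D) (n : ℕ) :
    g ^ n ∈ boolDegLE R α (n * D) := by
  simpa using prod_mem_boolDegLE (range n) (g := fun _ => g) (D := fun _ => D) fun _ _ => hg

lemma choose_ite_subset_mem_boolDegLE {T : Finset α} {d : ℕ} (hT : T.card ≤ d) (c i : ℕ) :
    (fun S => (((if T ⊆ S then c else 0).choose i : ℕ) : R)) ∈ boolDegLE R α (d * i) := by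
  cases i with
  | zero =>
    simp only [Nat.choose_zero_right, Nat.cast_one]
    exact one_mem_boolDegLE _
  | succ i =>
    convert Submodule.smul_mem _ ((c.choose (i + 1) : ℕ) : R)
      (boolMonomial_mem_boolDegLE (R := R) (hT.trans (Nat.le_mul_of_pos_right d i.succ_pos)))
      using 1
    funext S
    by_cases h : T ⊆ S <;> simp [boolMonomial, h]

lemma choose_sum_mem_boolDegLE (F : Finset (Finset α)) (a : Finset α → ℕ) {d : ℕ}
    (hF : ∀ T ∈ F, T.card ≤ d) (e : ℕ) :
    (fun S => (((∑ T ∈ F, if T ⊆ S then a T else 0).choose e : ℕ) : R)) ∈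
      boolDegLE R α (d * e) := by
  induction F using Finset.induction_on generalizing e with
  | empty =>
    convert Submodule.smul_mem _ (((0 : ℕ).choose e : ℕ) : R) (one_mem_boolDegLE (d * e)) using 1
    funext S; simp
  | insert T₀ F hT₀ ih =>
    have hsplit : (fun S => (((∑ T ∈ insert T₀ F, if T ⊆ S then a T else 0).choose e : ℕ) : R)) =
        ∑ ij ∈ antidiagonal e,
          (fun S => (((if T₀ ⊆ S then a T₀ else 0).choose ij.1 : ℕ) : R)) *
          (fun S => (((∑ T ∈ F, if T ⊆ S then a T else 0).choose ij.2 : ℕ) : R)) := by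
      funext S
      simp only [sum_insert hT₀, Nat.add_choose_eq, Finset.sum_apply, Pi.mul_apply]
      push_cast; rfl
    rw [hsplit]
    refine Submodule.sum_mem _ fun ij hij => ?_
    rw [← mem_antidiagonal.mp hij, mul_add]
    exact mul_mem_boolDegLE (choose_ite_subset_mem_boolDegLE (hF T₀ (mem_insert_self T₀ F)) _ _)
      (ih (fun T hT => hF T (mem_insert_of_mem hT)) _)

end BinomialIndicators

section Lucas

lemma Nat.pow_dvd_iff_forall_dvd_div_pow (p K n : ℕ) : p ^ K ∣ n ↔ ∀ κ < K, p ∣ n / p ^ κ := by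
  induction K with
  | zero => simp
  | succ K ih =>
    refine ⟨fun h κ hκ => ?_, fun h => ?_⟩
    · exact Nat.dvd_div_of_mul_dvd ((pow_succ p κ ▸ pow_dvd_pow p hκ).trans h)
    · rw [pow_succ]
      exact Nat.mul_dvd_of_dvd_div (ih.mpr fun κ hκ => h κ (by omega)) (h K K.lt_succ_self)

variable {p : ℕ} [Fact p.Prime]

lemma natCast_choose_prime_pow_eq_div (κ n : ℕ) :
    ((n.choose (p ^ κ) : ℕ) : ZMod p) = ((n / p ^ κ : ℕ) : ZMod p) := by
  induction κ generalizing n with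
  | zero => simp
  | succ κ ih =>
    have hp := (Fact.out : p.Prime).pos
    have lucas := (ZMod.intCast_eq_intCast_iff _ _ _).mpr
      (Choose.choose_modEq_choose_mod_mul_choose_div (n := n) (k := p ^ (κ + 1)) (p := p))
    push_cast at lucas
    rw [lucas, pow_succ, Nat.mul_mod_left, Nat.mul_div_cancel _ hp, Nat.choose_zero_right,
      Nat.cast_one, one_mul, ih, Nat.div_div_eq_div_mul, mul_comm]

lemma pow_dvd_iff_forall_natCast_choose_eq_zero (K n : ℕ) :
    p ^ K ∣ n ↔ ∀ κ < K, ((n.choose (p ^ κ) : ℕ) : ZMod p) = 0 := by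
  simp only [Nat.pow_dvd_iff_forall_dvd_div_pow, natCast_choose_prime_pow_eq_div,
    ZMod.natCast_eq_zero_iff]

/-- The `κ`-th base-`p` digit of `n` is `n.choose (p ^ κ)` modulo `p` (Lucas), and
`x ^ (p - 1) = 1` for `x ≠ 0` (Fermat). -/
lemma ite_pow_dvd_eq_prod (K n : ℕ) :
    (if p ^ K ∣ n then 1 else 0 : ZMod p) =
      ∏ κ ∈ range K, (1 - ((n.choose (p ^ κ) : ℕ) : ZMod p) ^ (p - 1)) := by
  have hp := (Fact.out : p.Prime).two_le
  by_cases h : p ^ K ∣ n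
  · rw [if_pos h]
    refine (prod_eq_one fun κ hκ => ?_).symm
    rw [(pow_dvd_iff_forall_natCast_choose_eq_zero K n).mp h κ (mem_range.mp hκ),
      zero_pow (by omega), sub_zero]
  · rw [if_neg h]
    obtain ⟨κ, hκ, hne⟩ : ∃ κ < K, ((n.choose (p ^ κ) : ℕ) : ZMod p) ≠ 0 := by
      simpa using mt (pow_dvd_iff_forall_natCast_choose_eq_zero K n).mpr h
    refine (prod_eq_zero (mem_range.mpr hκ) ?_).symm
    rw [ZMod.pow_card_sub_one_eq_one hne, sub_self]

variable {α : Type*} [DecidableEq α]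

lemma ite_pow_dvd_sum_mem_boolDegLE (F : Finset (Finset α)) (a : Finset α → ℕ) {d : ℕ}
    (hF : ∀ T ∈ F, T.card ≤ d) (K : ℕ) :
    (fun S => if p ^ K ∣ ∑ T ∈ F, (if T ⊆ S then a T else 0) then 1 else 0 : Finset α → ZMod p) ∈
      boolDegLE (ZMod p) α (d * (p ^ K - 1)) := by
  have hfun : (fun S => if p ^ K ∣ ∑ T ∈ F, (if T ⊆ S then a T else 0) then 1 else 0 :
      Finset α → ZMod p) = ∏ κ ∈ range K, (1 - (fun S =>
        (((∑ T ∈ F, if T ⊆ S then a T else 0).choose (p ^ κ) : ℕ) : ZMod p)) ^ (p - 1)) := by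
    funext S
    simp only [ite_pow_dvd_eq_prod, Finset.prod_apply, Pi.sub_apply, Pi.one_apply, Pi.pow_apply]
  have hdeg : d * (p ^ K - 1) = ∑ κ ∈ range K, (p - 1) * (d * p ^ κ) := by
    rw [← mul_sum, ← mul_sum, ← geom_sum_mul_of_one_le (Fact.out : p.Prime).one_le]
    ring
  rw [hfun, hdeg]
  exact prod_mem_boolDegLE _ fun κ _ => Submodule.sub_mem _ (one_mem_boolDegLE _)
    (pow_mem_boolDegLE (choose_sum_mem_boolDegLE F a hF _) _)

end Lucas

lemma AddCircle.exists_lt_nsmul_eq_of_nsmul_eq_zero {q : ℕ} (hq : 0 < q) {u : AddCircle (1 : ℝ)}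
    (hu : q • u = 0) : ∃ a < q, a • ((1 / q : ℝ) : AddCircle (1 : ℝ)) = u := by
  obtain ⟨a, ha, rfl⟩ := (AddCircle.nsmul_eq_zero_iff hq).mp hu
  exact ⟨a, ha, by rw [AddCircle.natCast_div_mul_eq_nsmul]⟩

section Window

variable {ι V : Type*} [DecidableEq ι] [AddCommGroup V] {d p : ℕ} {f : V → AddCircle (1 : ℝ)}

/-- `a T / p ^ d` are the Möbius coefficients of `S ↦ f (b + ∑ j ∈ S, v j)`, which takes values
in `p ^ (-d) ℤ / ℤ`. -/
lemma IsNCPoly.exists_coeff_pow_dvd_iff (hp : 0 < p) (hV : ∀ x : V, p • x = 0)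
    (hf : IsNCPoly d f) (v : ι → V) {b : V} (hb : f b = 0) :
    ∃ a : Finset ι → ℕ, (∀ T, d < T.card → a T = 0) ∧
      ∀ S, f (b + ∑ j ∈ S, v j) = 0 ↔ p ^ d ∣ ∑ T ∈ S.powerset, a T := by
  set g : Finset ι → AddCircle (1 : ℝ) := fun Q => f (b + ∑ j ∈ Q, v j)
  have hq : 0 < p ^ d := pow_pos hp d
  have hord : addOrderOf ((1 / (p ^ d : ℕ) : ℝ) : AddCircle (1 : ℝ)) = p ^ d :=
    AddCircle.addOrderOf_period_div hq
  have torsion : ∀ T, p ^ d • moebiusCoeff g T = 0 := fun T => by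
    refine (smul_sum ..).trans (sum_eq_zero fun Q _ => ?_)
    rw [smul_comm, hf.pow_smul_apply_add hV, hb, smul_zero, smul_zero]
  choose a ha hca using fun T => AddCircle.exists_lt_nsmul_eq_of_nsmul_eq_zero hq (torsion T)
  refine ⟨a, fun T hT => ?_, fun S => ?_⟩
  · have h0 := hf.moebiusCoeff_eq_zero v b hT
    rw [← hca T, ← addOrderOf_dvd_iff_nsmul_eq_zero, hord] at h0
    exact Nat.eq_zero_of_dvd_of_lt h0 (ha T)
  · change g S = 0 ↔ _
    rw [← sum_powerset_moebiusCoeff g S, ← sum_congr rfl fun T _ => hca T, sum_nsmul_assoc,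
      ← addOrderOf_dvd_iff_nsmul_eq_zero, hord]

variable [Fact p.Prime]

lemma IsNCPoly.exists_mem_boolDegLE_eqOn (hV : ∀ x : V, p • x = 0) (hf : IsNCPoly d f)
    (v : ι → V) {b : V} (hb : f b = 0) (W : Finset ι) :
    ∃ g ∈ boolDegLE (ZMod p) ι (d * (p ^ d - 1)),
      ∀ S ⊆ W, g S = if f (b + ∑ j ∈ S, v j) = 0 then 1 else 0 := by
  obtain ⟨a, ha, hrep⟩ := hf.exists_coeff_pow_dvd_iff (Fact.out : p.Prime).pos hV v hb
  set F := W.powerset.filter (·.card ≤ d)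
  refine ⟨_, ite_pow_dvd_sum_mem_boolDegLE F a (fun T hT => (mem_filter.mp hT).2) d,
    fun S hS => ?_⟩
  have hsum : ∑ T ∈ F, (if T ⊆ S then a T else 0) = ∑ T ∈ S.powerset, a T := by
    rw [← sum_filter]
    refine sum_subset (fun T hT => ?_) fun T hT hTF => ha T ?_
    · simp only [F, mem_filter, mem_powerset] at hT ⊢
      exact hT.2
    · simp only [F, mem_filter, mem_powerset] at hT hTF
      exact not_le.mp fun h => hTF ⟨⟨hT.trans hS, h⟩, hT⟩
  simp only [hsum, hrep]

/-- Chevalley–Warning: the indicator that `f` vanishes at `b + ∑ j ∈ S, v j` for all `b ∈ Bs` is a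
polynomial in `S ⊆ W` of degree `< |W|`, so its alternating sum over `W` vanishes; as `S = ∅`
contributes `1`, some nonempty `S` contributes too. -/
theorem IsNCPoly.exists_nonempty_subset_forall_apply_add_sum_eq_zero (hV : ∀ x : V, p • x = 0)
    (hf : IsNCPoly d f) (v : ι → V) {Bs : Finset V} (hBs : ∀ b ∈ Bs, f b = 0) {W : Finset ι}
    (hW : Bs.card * (d * (p ^ d - 1)) < W.card) :
    ∃ y ⊆ W, y.Nonempty ∧ ∀ b ∈ Bs, f (b + ∑ j ∈ y, v j) = 0 := by
  choose! g hg hgW using fun b hb => hf.exists_mem_boolDegLE_eqOn hV v (hBs b hb) W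
  have hP := prod_mem_boolDegLE Bs hg
  rw [sum_const, smul_eq_mul] at hP
  have hsum := sum_powerset_neg_one_pow_mul_eq_zero hP hW
  by_contra! hno
  have hterm : ∀ S ∈ W.powerset,
      (-1 : ZMod p) ^ S.card * (∏ b ∈ Bs, g b) S = if S = ∅ then 1 else 0 := by
    intro S hS
    rw [mem_powerset] at hS
    rw [Finset.prod_apply]
    split_ifs with hS0
    · subst hS0
      rw [card_empty, pow_zero, one_mul]
      refine prod_eq_one fun b hb => ?_
      rw [hgW b hb ∅ (empty_subset W), sum_empty, add_zero, if_pos (hBs b hb)]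
    · obtain ⟨b, hb, hne⟩ := hno S hS (nonempty_iff_ne_empty.mpr hS0)
      rw [prod_eq_zero hb (by rw [hgW b hb S hS, if_neg hne]), mul_zero]
  rw [sum_congr rfl hterm, sum_ite_eq' _ _ (fun _ => (1 : ZMod p)), if_pos (empty_mem_powerset W)]
    at hsum
  exact one_ne_zero hsum

end Window

lemma card_filter_powerset_card_le {α : Type*} (s : Finset α) (e : ℕ) :
    #{K ∈ s.powerset | K.card ≤ e} ≤ (s.card + 1) ^ e := by
  classical
  induction e with
  | zero => simpa using card_le_one.mpr fun K hK K' hK' => by simp_all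
  | succ e ih =>
    have hsplit : {K ∈ s.powerset | K.card ≤ e + 1} ⊆
        {K ∈ s.powerset | K.card ≤ e} ∪ powersetCard (e + 1) s := by
      intro K hK
      simp only [mem_filter, mem_powerset, mem_union, mem_powersetCard] at hK ⊢
      by_cases h : K.card ≤ e
      · exact Or.inl ⟨hK.1, h⟩
      · exact Or.inr ⟨hK.1, by omega⟩
    calc #{K ∈ s.powerset | K.card ≤ e + 1}
        ≤ (s.card + 1) ^ e + s.card ^ (e + 1) := by
          refine (card_le_card hsplit).trans ((card_union_le _ _).trans (add_le_add ih ?_))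
          exact (card_powersetCard _ _).trans_le (Nat.choose_le_pow _ _)
      _ ≤ (s.card + 1) ^ e + s.card * (s.card + 1) ^ e := by
          rw [pow_succ']
          gcongr
          omega
      _ = (s.card + 1) ^ (e + 1) := by ring

section Cube

variable {ι V : Type*} [AddCommGroup V] {d p : ℕ} [Fact p.Prime] {f : V → AddCircle (1 : ℝ)}

/-- The new block only has to work for the `≤ (|Y| + 1) ^ (d - 1)` faces of dimension `< d` of
the cube `Y`, by `IsNCPoly.apply_sum_eq_zero_of_subset_insert`. -/
theorem IsNCPoly.exists_nonempty_subset_forall_subset_insert [DecidableEq ι]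
    (hV : ∀ x : V, p • x = 0) (hf : IsNCPoly d f) (v : ι → V) {Y : Finset (Finset ι)}
    (hY : ∀ K ⊆ Y, f (∑ y ∈ K, ∑ j ∈ y, v j) = 0) {W : Finset ι}
    (hW : (Y.card + 1) ^ (d - 1) * (d * (p ^ d - 1)) < W.card) :
    ∃ y₀ ⊆ W, y₀.Nonempty ∧ ∀ K ⊆ insert y₀ Y, f (∑ y ∈ K, ∑ j ∈ y, v j) = 0 := by
  classical
  set Bs := {K ∈ Y.powerset | K.card ≤ d - 1}.image fun K => ∑ y ∈ K, ∑ j ∈ y, v j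
  have hBs : ∀ b ∈ Bs, f b = 0 := by
    simp only [Bs, mem_image, mem_filter, mem_powerset]
    rintro _ ⟨K, ⟨hKY, -⟩, rfl⟩
    exact hY K hKY
  have hBscard : Bs.card * (d * (p ^ d - 1)) < W.card :=
    (Nat.mul_le_mul_right _ (card_image_le.trans (card_filter_powerset_card_le Y (d - 1)))).trans_lt
      hW
  obtain ⟨y₀, hy₀W, hy₀ne, hy₀⟩ :=
    hf.exists_nonempty_subset_forall_apply_add_sum_eq_zero hV v hBs hBscard
  refine ⟨y₀, hy₀W, hy₀ne, fun K hK => ?_⟩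
  refine hf.apply_sum_eq_zero_of_subset_insert (fun y => ∑ j ∈ y, v j) hY (fun K hKY hKd => ?_) hK
  rw [add_comm]
  exact hy₀ _ (mem_image_of_mem _ (mem_filter.mpr ⟨mem_powerset.mpr hKY, by omega⟩))

/-- The blocks are chosen one at a time, each inside a fresh window of `W` elements of `A`. -/
theorem IsNCPoly.exists_cube (hV : ∀ x : V, p • x = 0) (hf : IsNCPoly d f) (hf0 : f 0 = 0)
    (v : ι → V) {m W : ℕ} (hW : m ^ (d - 1) * (d * (p ^ d - 1)) < W) {A : Finset ι}
    (hA : m * W ≤ A.card) :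
    ∃ Y : Finset (Finset ι), Y.card = m ∧ (∀ y ∈ Y, y.Nonempty ∧ y ⊆ A) ∧
      (Y : Set (Finset ι)).PairwiseDisjoint id ∧ ∀ K ⊆ Y, f (∑ y ∈ K, ∑ j ∈ y, v j) = 0 := by
  suffices ∀ k ≤ m, ∀ A : Finset ι, k * W ≤ A.card →
      ∃ Y : Finset (Finset ι), Y.card = k ∧ (∀ y ∈ Y, y.Nonempty ∧ y ⊆ A) ∧
        (Y : Set (Finset ι)).PairwiseDisjoint id ∧ ∀ K ⊆ Y, f (∑ y ∈ K, ∑ j ∈ y, v j) = 0 from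
    this m le_rfl A hA
  classical
  intro k
  induction k with
  | zero =>
    refine fun _ A _ => ⟨∅, rfl, by simp, by simp, fun K hK => ?_⟩
    rw [subset_empty.mp hK, sum_empty, hf0]
  | succ k ih =>
    intro hk A hA
    rw [Nat.succ_mul] at hA
    obtain ⟨Wd, hWdA, hWd⟩ := exists_subset_card_eq (show W ≤ A.card by omega)
    obtain ⟨Y, hYcard, hYA, hYdisj, hYzero⟩ :=
      ih (by omega) (A \ Wd) (by rw [card_sdiff_of_subset hWdA, hWd]; omega)
    have hWd' : (Y.card + 1) ^ (d - 1) * (d * (p ^ d - 1)) < Wd.card := by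
      rw [hYcard, hWd]
      exact (Nat.mul_le_mul_right _ (Nat.pow_le_pow_left hk _)).trans_lt hW
    obtain ⟨y₀, hy₀Wd, hy₀ne, hy₀⟩ :=
      hf.exists_nonempty_subset_forall_subset_insert hV v hYzero hWd'
    have hdisj : ∀ y ∈ Y, Disjoint y₀ y := fun y hy =>
      disjoint_of_subset_left hy₀Wd (disjoint_of_subset_right (hYA y hy).2 disjoint_sdiff)
    have hy₀Y : y₀ ∉ Y := fun h => hy₀ne.ne_empty (disjoint_self.mp (hdisj y₀ h))
    refine ⟨insert y₀ Y, by rw [card_insert_of_notMem hy₀Y, hYcard], ?_, ?_, hy₀⟩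
    · refine forall_mem_insert _ _ _ |>.mpr ⟨⟨hy₀ne, hy₀Wd.trans hWdA⟩, fun y hy => ?_⟩
      exact ⟨(hYA y hy).1, (hYA y hy).2.trans sdiff_subset⟩
    · rw [coe_insert]
      exact hYdisj.insert fun y hy _ => hdisj y hy

end Cube

section Iteration

/-- With `m = cubeSize d q j`, the next size provides `m` windows of `(m q²)^d` elements, enough
for an `m`-block cube for one more modulus `≤ q` (`pow_sub_one_mul_lt_mul_sq_pow`). -/
def cubeSize (d q : ℕ) : ℕ → ℕ
  | 0 => 1
  | j + 1 => cubeSize d q j * (cubeSize d q j * q ^ 2) ^ d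

lemma cubeSize_mul_sq (d q j : ℕ) : cubeSize d q j * q ^ 2 = q ^ (2 * (d + 1) ^ j) := by
  induction j with
  | zero => simp [cubeSize]
  | succ j ih =>
    calc cubeSize d q (j + 1) * q ^ 2 = (cubeSize d q j * q ^ 2) ^ (d + 1) := by
          rw [cubeSize]; ring
      _ = q ^ (2 * (d + 1) ^ (j + 1)) := by rw [ih, ← pow_mul]; ring_nf

lemma cubeSize_pos {q : ℕ} (hq : 0 < q) (d j : ℕ) : 0 < cubeSize d q j :=
  Nat.pos_of_mul_pos_right ((cubeSize_mul_sq d q j).symm ▸ pow_pos hq _)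

lemma cubeSize_le_pow {q : ℕ} (hq : 0 < q) (d j : ℕ) : cubeSize d q j ≤ q ^ (2 * (d + 1) ^ j) :=
  cubeSize_mul_sq d q j ▸ Nat.le_mul_of_pos_right _ (by positivity)

lemma pow_sub_one_mul_lt_mul_sq_pow {d p q m : ℕ} (hp : 2 ≤ p) (hpq : p ≤ q) (hm : 0 < m) :
    m ^ (d - 1) * (d * (p ^ d - 1)) < (m * q ^ 2) ^ d := by
  cases d with
  | zero => simp
  | succ d =>
    have hd : d + 1 < q ^ (d + 1) :=
      (Nat.lt_two_pow_self).trans_le (Nat.pow_le_pow_left (hp.trans hpq) _)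
    have hpd : p ^ (d + 1) - 1 < q ^ (d + 1) :=
      (Nat.sub_lt (by positivity) one_pos).trans_le (Nat.pow_le_pow_left hpq _)
    calc m ^ (d + 1 - 1) * ((d + 1) * (p ^ (d + 1) - 1))
        < m ^ d * (q ^ (d + 1) * q ^ (d + 1)) :=
          Nat.mul_lt_mul_of_pos_left (Nat.mul_lt_mul'' hd hpd) (by positivity)
      _ ≤ m ^ (d + 1) * (q ^ (d + 1) * q ^ (d + 1)) :=
          Nat.mul_le_mul_right _ (Nat.pow_le_pow_right hm d.le_succ)
      _ = (m * q ^ 2) ^ (d + 1) := by ring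

/-- One modulus at a time: a cube for `p i` is found among the elements, and the remaining moduli
are handled inside it, its blocks playing the role of the elements. -/
theorem exists_nonempty_forall_apply_sum_eq_zero {ι : Type*} {V : ι → Type*}
    [∀ i, AddCommGroup (V i)] {p : ι → ℕ} (hp : ∀ i, (p i).Prime) {q : ℕ} (hpq : ∀ i, p i ≤ q)
    (hV : ∀ i (x : V i), p i • x = 0) {d : ℕ} {f : ∀ i, V i → AddCircle (1 : ℝ)}
    (hf : ∀ i, IsNCPoly d (f i)) (hf0 : ∀ i, f i 0 = 0) (s : Finset ι) {κ : Type*}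
    (v : ∀ i, κ → V i) {A : Finset κ} (hA : cubeSize d q s.card ≤ A.card) :
    ∃ K ⊆ A, K.Nonempty ∧ ∀ i ∈ s, f i (∑ j ∈ K, v i j) = 0 := by
  classical
  induction s using Finset.induction_on generalizing κ with
  | empty =>
    obtain ⟨a, ha⟩ := card_pos.mp (lt_of_lt_of_le one_pos hA)
    exact ⟨{a}, singleton_subset_iff.mpr ha, singleton_nonempty a, by simp⟩
  | insert i s hi ih =>
    have := Fact.mk (hp i)
    rw [card_insert_of_notMem hi] at hA
    obtain ⟨Y, hYcard, hYA, hYdisj, hYzero⟩ := (hf i).exists_cube (hV i) (hf0 i) (v i)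
      (pow_sub_one_mul_lt_mul_sq_pow (hp i).two_le (hpq i)
        (cubeSize_pos ((hp i).pos.trans_le (hpq i)) d s.card)) hA
    obtain ⟨K, hKY, hKne, hKzero⟩ := ih (fun i y => ∑ j ∈ y, v i j) hYcard.ge
    have hsum : ∀ i, ∑ j ∈ K.biUnion id, v i j = ∑ y ∈ K, ∑ j ∈ y, v i j := fun i =>
      sum_biUnion (hYdisj.subset (coe_subset.mpr hKY))
    refine ⟨K.biUnion id, biUnion_subset.mpr fun y hy => (hYA y (hKY hy)).2, ?_, ?_⟩
    · obtain ⟨y, hy⟩ := hKne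
      exact biUnion_nonempty.mpr ⟨y, hy, (hYA y (hKY hy)).1⟩
    · intro i' hi'
      rw [hsum]
      rcases mem_insert.mp hi' with rfl | hi'
      · exact hYzero K hKY
      · exact hKzero i' hi'

end Iteration

theorem stmt18_general (r n d : ℕ) (p : Fin r → ℕ)
    (hp : ∀ i, (p i).Prime)
    (pm : ℕ) (hpm : ∀ i, p i ≤ pm) (hpm' : ∃ i, p i = pm)
    (f : (i : Fin r) → (Fin n → ZMod (p i)) → AddCircle (1 : ℝ))
    (hdeg : ∀ i, IsNCPoly d (f i))
    (h0 : ∀ i, f i (fun _ => 0) = 0)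
    (hOR : ∀ x : Fin n → Bool, x ≠ (fun _ => false) →
      ∃ i, f i (fun j => if x j then 1 else 0) ≠ 0) :
    (n : ℝ) < 2 ^ (4 * ((d : ℝ) + 1) ^ r * Real.logb 2 pm) := by
  obtain ⟨i₀, rfl⟩ := hpm'
  have hpm2 := (hp i₀).two_le
  have hn : n < cubeSize d (p i₀) r := by
    by_contra! hn
    obtain ⟨K, -, ⟨t, ht⟩, hK⟩ := exists_nonempty_forall_apply_sum_eq_zero hp hpm
      (fun i x => by ext; simp) hdeg h0 univ (fun i t => Pi.single t (1 : ZMod (p i)))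
      (A := univ) (by simpa using hn)
    obtain ⟨i, hi⟩ := hOR (fun t => decide (t ∈ K)) fun h => by simpa [ht] using congrFun h t
    refine hi (Eq.trans ?_ (hK i (mem_univ i)))
    congr 1
    funext j
    simp [Finset.sum_apply, Pi.single_apply]
  have hbound : cubeSize d (p i₀) r ≤ p i₀ ^ (4 * (d + 1) ^ r) :=
    (cubeSize_le_pow (by omega) d r).trans (Nat.pow_le_pow_right (by omega) (by omega))
  calc (n : ℝ) < ((p i₀ ^ (4 * (d + 1) ^ r) : ℕ) : ℝ) := by exact_mod_cast hn.trans_le hbound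
    _ = 2 ^ (4 * ((d : ℝ) + 1) ^ r * Real.logb 2 (p i₀)) := by
      rw [mul_comm (4 * ((d : ℝ) + 1) ^ r), Real.rpow_mul zero_le_two,
        Real.rpow_logb two_pos (by norm_num) (by positivity)]
      exact_mod_cast (Real.rpow_natCast (p i₀ : ℝ) (4 * (d + 1) ^ r)).symm

/-- Lower bound for weak representation of OR by nonclassical polynomials over
distinct prime moduli: if all degrees are at most `d` then
`n < 2^{4(d+1)^r log₂ p}` where `p = max pᵢ`. -/
theorem stmt18 (r n d : ℕ) (hr : 1 ≤ r) (p : Fin r → ℕ)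
    (hp : ∀ i, (p i).Prime) (hinj : Function.Injective p)
    (pm : ℕ) (hpm : ∀ i, p i ≤ pm) (hpm' : ∃ i, p i = pm)
    (f : (i : Fin r) → (Fin n → ZMod (p i)) → AddCircle (1 : ℝ))
    (hdeg : ∀ i, IsNCPoly d (f i))
    (h0 : ∀ i, f i (fun _ => 0) = 0)
    (hOR : ∀ x : Fin n → Bool, x ≠ (fun _ => false) →
      ∃ i, f i (fun j => if x j then 1 else 0) ≠ 0) :
    (n : ℝ) < 2 ^ (4 * ((d : ℝ) + 1) ^ r * Real.logb 2 pm) :=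
  stmt18_general r n d p hp pm hpm hpm' f hdeg h0 hOR
end
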